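/- arXiv:2308.05516 — 5 statements merged into one kernel-verified Lean document; each statement's English description precedes it below -/
import Mathlib

section
/- Let k ≥ 1, let C ⊆ ℝ^k be a nonempty open convex set, let f : C → ℝ^k be a continuous injection with convex image, and let S ⊆ C be a k-dimensional compact set. If f[int(conv(S))] ⊆ int(conv(f[S])), then f[conv(S)] ⊆ conv(f[S]). (Implication (ii) ⟹ (iii) of the main theorem under compactness of S.) -/
open Set

open Filter Finset in
/-- The convex hull of a compact set in `ℝ^k` is compact (via Carathéodory). -/
lemma auxIsCompactConvexHull {k : ℕ} {s : Set (Fin k → ℝ)} (hs : IsCompact s) :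
    IsCompact (convexHull ℝ s) := by
  rcases s.eq_empty_or_nonempty with rfl | ⟨x₀, hx₀⟩
  · simpa using isCompact_empty
  set n := k + 1 with hn
  set D : Set ((Fin n → ℝ) × (Fin n → Fin k → ℝ)) :=
    (stdSimplex ℝ (Fin n)) ×ˢ (Set.univ.pi fun _ : Fin n => s) with hD
  have hDcomp : IsCompact D :=
    (isCompact_stdSimplex (𝕜 := ℝ) (ι := Fin n)).prod (isCompact_univ_pi fun _ => hs)
  set g : ((Fin n → ℝ) × (Fin n → Fin k → ℝ)) → (Fin k → ℝ) :=
    fun p => ∑ i, p.1 i • p.2 i with hg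
  have hgc : Continuous g :=
    continuous_finset_sum _ fun i _ =>
      ((continuous_apply i).comp continuous_fst).smul
        ((continuous_apply i).comp continuous_snd)
  have key : convexHull ℝ s = g '' D := by
    apply Set.Subset.antisymm
    · intro x hx
      obtain ⟨ι, hι, z, w, hzs, hai, hw0, hw1, hwx⟩ :=
        eq_pos_convex_span_of_mem_convexHull hx
      letI := hι
      have hcard : Fintype.card ι ≤ Fintype.card (Fin n) := by
        have h1 := hai.card_le_finrank_succ
        have h2 : Module.finrank ℝ (vectorSpan ℝ (Set.range z)) ≤ k := by
          simpa using Submodule.finrank_le (vectorSpan ℝ (Set.range z))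
        simp only [Fintype.card_fin, hn]
        omega
      obtain ⟨e⟩ := Function.Embedding.nonempty_of_card_le hcard
      set w' : Fin n → ℝ := Function.extend e w 0 with hw'
      set z' : Fin n → (Fin k → ℝ) := Function.extend e z (fun _ => x₀) with hz'
      have hinj := e.injective
      have hwe : ∀ i, w' (e i) = w i := fun i => hinj.extend_apply w 0 i
      have hze : ∀ i, z' (e i) = z i := fun i => hinj.extend_apply z _ i
      have hout : ∀ j, j ∉ Finset.univ.image e → w' j = 0 := by
        intro j hj
        rw [hw', Function.extend_def]
        rw [dif_neg]
        · rfl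
        · rintro ⟨i, rfl⟩
          exact hj (Finset.mem_image.2 ⟨i, Finset.mem_univ i, rfl⟩)
      refine ⟨(w', z'), ⟨?_, ?_⟩, ?_⟩
      · constructor
        · intro j
          show 0 ≤ w' j
          by_cases hj : j ∈ Finset.univ.image e
          · obtain ⟨i, _, rfl⟩ := Finset.mem_image.1 hj
            rw [hwe]
            exact (hw0 i).le
          · rw [hout j hj]
        · show ∑ j, w' j = 1
          have h1 : ∑ j ∈ Finset.univ.image e, w' j = ∑ i, w i := by
            rw [Finset.sum_image (fun a _ b _ h => hinj h)]
            exact Finset.sum_congr rfl fun i _ => hwe i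
          calc ∑ j, w' j = ∑ j ∈ Finset.univ.image e, w' j :=
                (Finset.sum_subset (Finset.subset_univ _) fun j _ hj => hout j hj).symm
            _ = ∑ i, w i := h1
            _ = 1 := hw1
      · intro j _
        show z' j ∈ s
        by_cases hj : j ∈ Finset.univ.image e
        · obtain ⟨i, _, rfl⟩ := Finset.mem_image.1 hj
          rw [hze]
          exact hzs ⟨i, rfl⟩
        · have : z' j = x₀ := by
            rw [hz', Function.extend_def, dif_neg]
            rintro ⟨i, rfl⟩
            exact hj (Finset.mem_image.2 ⟨i, Finset.mem_univ i, rfl⟩)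
          rw [this]; exact hx₀
      · show ∑ j, w' j • z' j = x
        have h1 : ∑ j ∈ Finset.univ.image e, w' j • z' j = ∑ i, w i • z i := by
          rw [Finset.sum_image (fun a _ b _ h => hinj h)]
          exact Finset.sum_congr rfl fun i _ => by rw [hwe, hze]
        calc ∑ j, w' j • z' j = ∑ j ∈ Finset.univ.image e, w' j • z' j :=
              (Finset.sum_subset (Finset.subset_univ _) fun j _ hj => by
                rw [hout j hj, zero_smul]).symm
          _ = ∑ i, w i • z i := h1
          _ = x := hwx
    · rintro _ ⟨⟨w, p⟩, ⟨hw, hp⟩, rfl⟩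
      exact (convex_convexHull ℝ s).sum_mem (fun i _ => hw.1 i) hw.2
        (fun i _ => subset_convexHull ℝ s (hp i (Set.mem_univ i)))
  rw [key]
  exact hDcomp.image hgc

/-- A convex set with nonempty interior is contained in the closure of its interior. -/
lemma auxSubsetClosureInterior {k : ℕ} {s : Set (Fin k → ℝ)} (hs : Convex ℝ s)
    (h : (interior s).Nonempty) : s ⊆ closure (interior s) := by
  obtain ⟨y, hy⟩ := h
  intro x hx
  have htend : Filter.Tendsto (fun m : ℕ => x + (1 / (m + 1) : ℝ) • (y - x))
      Filter.atTop (nhds x) := by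
    have h0 := tendsto_one_div_add_atTop_nhds_zero_nat (𝕜 := ℝ)
    have := (h0.smul_const (y - x)).const_add x
    simpa using this
  refine mem_closure_of_tendsto htend (Filter.Eventually.of_forall fun m => ?_)
  refine hs.add_smul_sub_mem_interior hx hy ⟨by positivity, ?_⟩
  rw [div_le_one (by positivity)]
  have : (0 : ℝ) ≤ m := Nat.cast_nonneg m
  linarith

/-- (ii) ⟹ (iii) of the main theorem under compactness of `S`: if `S` is compact and
`f[int (conv S)] ⊆ int (conv f[S])`, then `f[conv S] ⊆ conv f[S]`. -/
theorem stmt3 {k : ℕ} (hk : 1 ≤ k)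
    (C : Set (Fin k → ℝ)) (hCne : C.Nonempty) (hCopen : IsOpen C) (hCconv : Convex ℝ C)
    (f : (Fin k → ℝ) → (Fin k → ℝ)) (hfc : ContinuousOn f C) (hfi : Set.InjOn f C)
    (hfim : Convex ℝ (f '' C))
    (S : Set (Fin k → ℝ)) (hS : S ⊆ C) (hScomp : IsCompact S)
    (hdim : (interior (convexHull ℝ S)).Nonempty)
    (h : f '' interior (convexHull ℝ S) ⊆ interior (convexHull ℝ (f '' S))) :
    f '' convexHull ℝ S ⊆ convexHull ℝ (f '' S) := by
  have hsub : convexHull ℝ S ⊆ C := convexHull_min hS hCconv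
  have hcomp : IsCompact (convexHull ℝ S) := auxIsCompactConvexHull hScomp
  have hclosed : IsClosed (convexHull ℝ S) := hcomp.isClosed
  have hcl : closure (interior (convexHull ℝ S)) = convexHull ℝ S :=
    Subset.antisymm (hclosed.closure_subset_iff.mpr interior_subset)
      ((auxSubsetClosureInterior (convex_convexHull ℝ S) hdim).trans subset_rfl)
  have hfc' : ContinuousOn f (closure (interior (convexHull ℝ S))) := by
    rw [hcl]; exact hfc.mono hsub
  have himcomp : IsCompact (convexHull ℝ (f '' S)) :=
    auxIsCompactConvexHull (hScomp.image_of_continuousOn (hfc.mono hS))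
  calc f '' convexHull ℝ S = f '' closure (interior (convexHull ℝ S)) := by rw [hcl]
    _ ⊆ closure (f '' interior (convexHull ℝ S)) := hfc'.image_closure
    _ ⊆ closure (interior (convexHull ℝ (f '' S))) := closure_mono h
    _ ⊆ closure (convexHull ℝ (f '' S)) := closure_mono interior_subset
    _ = convexHull ℝ (f '' S) := himcomp.isClosed.closure_eq
end

section
/- (Green–Gustin) Let k ≥ 1 and fix m ≥ 2 positive real weights α₁,…,α_m with sum 1. Let f be the identity map on ℝ^k, so that for S ⊆ ℝ^k the quasi-arithmetic mean set is 𝓜(S) = { α₁x₁+⋯+α_m x_m : x₁,…,x_m ∈ S }. Then for every set S ⊆ ℝ^k, the infinite iteration 𝓜^ω(S) is relatively dense in conv(S). -/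
open Set

/-- The weighted-arithmetic-mean set (quasi-arithmetic mean for `f = id`):
`𝓜(S) = { α₁ x₁ + ⋯ + α_m x_m : x₁,…,x_m ∈ S }`. -/
def meanSetId {k m : ℕ} (α : Fin m → ℝ) (S : Set (Fin k → ℝ)) : Set (Fin k → ℝ) :=
  {y | ∃ x : Fin m → (Fin k → ℝ), (∀ i, x i ∈ S) ∧ y = ∑ i, α i • x i}

/-- Iterates: `𝓜⁰(S) = S`, `𝓜ⁿ⁺¹(S) = 𝓜(𝓜ⁿ(S))`. -/
def meanIterId {k m : ℕ} (α : Fin m → ℝ) (S : Set (Fin k → ℝ)) : ℕ → Set (Fin k → ℝ)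
  | 0 => S
  | n + 1 => meanSetId α (meanIterId α S n)

/-- `𝓜^ω(S) = ⋃ₙ 𝓜ⁿ(S)`. -/
def meanOmegaId {k m : ℕ} (α : Fin m → ℝ) (S : Set (Fin k → ℝ)) : Set (Fin k → ℝ) :=
  ⋃ n, meanIterId α S n

lemma subset_meanSetId {k m : ℕ} (α : Fin m → ℝ) (hα1 : ∑ i, α i = 1)
    (S : Set (Fin k → ℝ)) : S ⊆ meanSetId α S := by
  intro y hy
  exact ⟨fun _ => y, fun _ => hy, by rw [← Finset.sum_smul, hα1, one_smul]⟩

lemma meanSetId_mono {k m : ℕ} (α : Fin m → ℝ) {S T : Set (Fin k → ℝ)} (h : S ⊆ T) :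
    meanSetId α S ⊆ meanSetId α T := by
  rintro y ⟨x, hx, rfl⟩
  exact ⟨x, fun i => h (hx i), rfl⟩

lemma meanIterId_mono {k m : ℕ} (α : Fin m → ℝ) (hα1 : ∑ i, α i = 1)
    (S : Set (Fin k → ℝ)) {n N : ℕ} (h : n ≤ N) :
    meanIterId α S n ⊆ meanIterId α S N := by
  induction N with
  | zero => simpa [Nat.le_zero.mp h] using Set.Subset.rfl
  | succ N ih =>
    rcases Nat.lt_or_ge n (N + 1) with h' | h'
    · exact (ih (Nat.lt_succ_iff.mp h')).trans
        (subset_meanSetId α hα1 _)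
    · have : n = N + 1 := le_antisymm h h'
      subst this; rfl

lemma meanOmegaId_closed {k m : ℕ} (α : Fin m → ℝ) (hα1 : ∑ i, α i = 1)
    (S : Set (Fin k → ℝ)) (x : Fin m → (Fin k → ℝ))
    (hx : ∀ i, x i ∈ meanOmegaId α S) :
    (∑ i, α i • x i) ∈ meanOmegaId α S := by
  have hex : ∀ i, ∃ n, x i ∈ meanIterId α S n := by
    intro i; simpa [meanOmegaId, Set.mem_iUnion] using hx i
  choose n hn using hex
  set N := Finset.univ.sup n with hN
  have hmem : ∀ i, x i ∈ meanIterId α S N := fun i =>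
    meanIterId_mono α hα1 S (Finset.le_sup (Finset.mem_univ i)) (hn i)
  have : (∑ i, α i • x i) ∈ meanIterId α S (N + 1) := ⟨x, hmem, rfl⟩
  exact Set.mem_iUnion.mpr ⟨N + 1, this⟩

lemma meanOmegaId_subset_convexHull {k m : ℕ} (α : Fin m → ℝ)
    (hα : ∀ i, 0 < α i) (hα1 : ∑ i, α i = 1) (S : Set (Fin k → ℝ)) :
    meanOmegaId α S ⊆ convexHull ℝ S := by
  have : ∀ n, meanIterId α S n ⊆ convexHull ℝ S := by
    intro n
    induction n with
    | zero => exact subset_convexHull ℝ S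
    | succ n ih =>
      rintro y ⟨x, hx, rfl⟩
      exact (convex_convexHull ℝ S).sum_mem (fun i _ => (hα i).le)
        hα1 (fun i _ => ih (hx i))
  exact Set.iUnion_subset this

lemma dense_aux (β : ℝ) (hβ0 : 0 < β) (hβ1 : β < 1) (L : Set ℝ)
    (hL : L ⊆ Icc 0 1) (h0 : (0:ℝ) ∈ L) (h1 : (1:ℝ) ∈ L)
    (hg : ∀ x ∈ L, ∀ y ∈ L, β * x + (1 - β) * y ∈ L) :
    Icc (0:ℝ) 1 ⊆ closure L := by
  intro c hc
  by_contra hcK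
  set K := closure L with hK
  have hKclosed : IsClosed K := isClosed_closure
  have hKsub : K ⊆ Icc 0 1 := closure_minimal hL isClosed_Icc
  have hgK : ∀ x ∈ K, ∀ y ∈ K, β * x + (1 - β) * y ∈ K := by
    intro x hx y hy
    exact map_mem_closure₂ (f := fun a b : ℝ => β * a + (1 - β) * b)
      (by fun_prop) hx hy hg
  have h0K : (0:ℝ) ∈ K := subset_closure h0
  have h1K : (1:ℝ) ∈ K := subset_closure h1
  have hA : (K ∩ Icc 0 c).Nonempty := ⟨0, h0K, le_refl 0, hc.1⟩
  have hB : (K ∩ Icc c 1).Nonempty := ⟨1, h1K, hc.2, le_refl 1⟩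
  have hAc : IsClosed (K ∩ Icc 0 c) := hKclosed.inter isClosed_Icc
  have hBc : IsClosed (K ∩ Icc c 1) := hKclosed.inter isClosed_Icc
  have hAb : BddAbove (K ∩ Icc 0 c) := ⟨c, fun x hx => hx.2.2⟩
  have hBb : BddBelow (K ∩ Icc c 1) := ⟨c, fun x hx => hx.2.1⟩
  set u := sSup (K ∩ Icc 0 c) with hu
  set v := sInf (K ∩ Icc c 1) with hv
  have huMem : u ∈ K ∩ Icc 0 c := hAc.csSup_mem hA hAb
  have hvMem : v ∈ K ∩ Icc c 1 := hBc.csInf_mem hB hBb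
  have huc : u < c := lt_of_le_of_ne huMem.2.2 (fun h => hcK (h ▸ huMem.1))
  have hcv : c < v := lt_of_le_of_ne (hvMem.2.1) (fun h => hcK (h ▸ hvMem.1))
  set w := β * v + (1 - β) * u with hw
  have hwK : w ∈ K := hgK v hvMem.1 u huMem.1
  have huv : u < v := huc.trans hcv
  have huw : u < w := by nlinarith
  have hwv : w < v := by nlinarith
  rcases le_or_gt w c with h | h
  · have : w ∈ K ∩ Icc 0 c := ⟨hwK, le_trans huMem.2.1 huw.le, h⟩
    exact absurd (le_csSup hAb this) (not_le.mpr huw)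
  · have : w ∈ K ∩ Icc c 1 := ⟨hwK, h.le, le_trans hwv.le hvMem.2.2⟩
    exact absurd (csInf_le hBb this) (not_le.mpr hwv)

/-- Green–Gustin: for `f = id` and any weights `α₁,…,α_m > 0` with sum `1`,
`𝓜^ω(S)` is relatively dense in `conv S` for every `S ⊆ ℝᵏ`. -/
theorem stmt4 {k m : ℕ} (hk : 1 ≤ k) (hm : 2 ≤ m)
    (α : Fin m → ℝ) (hα : ∀ i, 0 < α i) (hα1 : ∑ i, α i = 1)
    (S : Set (Fin k → ℝ)) :
    convexHull ℝ S ⊆ closure (meanOmegaId α S ∩ convexHull ℝ S) := by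
  set M := meanOmegaId α S with hM
  have hMconv : M ∩ convexHull ℝ S = M :=
    Set.inter_eq_left.mpr (meanOmegaId_subset_convexHull α hα hα1 S)
  rw [hMconv]
  -- β = α 0 ∈ (0,1)
  have hm0 : (0 : ℕ) < m := by omega
  have hm1 : (1 : ℕ) < m := by omega
  set i0 : Fin m := ⟨0, hm0⟩ with hi0
  set i1 : Fin m := ⟨1, hm1⟩ with hi1
  set β := α i0 with hβ
  have hβ0 : 0 < β := hα i0
  have hβ1 : β < 1 := by
    have h1 : α i0 + ∑ i ∈ Finset.univ.erase i0, α i = 1 := by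
      rw [Finset.add_sum_erase _ _ (Finset.mem_univ i0)]; exact hα1
    have h2 : 0 < ∑ i ∈ Finset.univ.erase i0, α i := by
      apply Finset.sum_pos' (fun i _ => (hα i).le)
      exact ⟨i1, Finset.mem_erase.mpr ⟨by simp [hi0, hi1, Fin.ext_iff], Finset.mem_univ i1⟩,
        hα i1⟩
    linarith
  have hrest : ∑ i ∈ Finset.univ.erase i0, α i = 1 - β := by
    have := Finset.add_sum_erase Finset.univ α (Finset.mem_univ i0)
    rw [hα1] at this; linarith [this]
  -- key: segments between points of M lie in closure M
  have hseg : ∀ a ∈ M, ∀ b ∈ M, ∀ t : ℝ, t ∈ Icc (0:ℝ) 1 →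
      t • a + (1 - t) • b ∈ closure M := by
    intro a ha b hb t ht
    set L : Set ℝ := {l | l ∈ Icc (0:ℝ) 1 ∧ l • a + (1 - l) • b ∈ M} with hLdef
    have hLsub : L ⊆ Icc 0 1 := fun l hl => hl.1
    have h0L : (0:ℝ) ∈ L := ⟨⟨le_refl 0, zero_le_one⟩, by simpa using hb⟩
    have h1L : (1:ℝ) ∈ L := ⟨⟨zero_le_one, le_refl 1⟩, by simpa using ha⟩
    have hgL : ∀ x ∈ L, ∀ y ∈ L, β * x + (1 - β) * y ∈ L := by
      intro x hx y hy
      constructor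
      · constructor
        · nlinarith [hx.1.1, hy.1.1]
        · nlinarith [hx.1.2, hy.1.2]
      · -- use mean-closedness of M
        set z : Fin m → (Fin k → ℝ) := fun i =>
          if i = i0 then x • a + (1 - x) • b else y • a + (1 - y) • b with hz
        have hzmem : ∀ i, z i ∈ M := by
          intro i
          by_cases h : i = i0 <;> simp [hz, h, hx.2, hy.2]
        have hsum := meanOmegaId_closed α hα1 S z hzmem
        have : ∑ i, α i • z i =
            (β * x + (1 - β) * y) • a + (1 - (β * x + (1 - β) * y)) • b := by
          rw [← Finset.add_sum_erase Finset.univ (fun i => α i • z i)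
            (Finset.mem_univ i0)]
          have hzi0 : z i0 = x • a + (1 - x) • b := by simp [hz]
          have hrest2 : ∑ i ∈ Finset.univ.erase i0, α i • z i =
              (1 - β) • (y • a + (1 - y) • b) := by
            rw [← hrest, Finset.sum_smul]
            apply Finset.sum_congr rfl
            intro i hi
            have : i ≠ i0 := (Finset.mem_erase.mp hi).1
            simp [hz, this]
          rw [hzi0, hrest2]
          funext j
          simp only [Pi.add_apply, Pi.smul_apply, smul_eq_mul]
          ring
        rw [this] at hsum
        exact hsum
    have htcl : t ∈ closure L := dense_aux β hβ0 hβ1 L hLsub h0L h1L hgL ht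
    have hcont : Continuous (fun l : ℝ => l • a + (1 - l) • b) := by fun_prop
    have := map_mem_closure hcont htcl (fun l hl => hl.2)
    exact this
  -- closure M is convex
  have hconv : Convex ℝ (closure M) := by
    intro a ha b hb s t hs ht hst
    have key : ∀ x ∈ M, ∀ y ∈ M, s • x + t • y ∈ closure M := by
      intro x hx y hy
      have : t = 1 - s := by linarith
      rw [this]
      exact hseg x hx y hy s ⟨hs, by linarith⟩
    have h2 : s • a + t • b ∈ closure (closure M) :=
      map_mem_closure₂ (f := fun x y : Fin k → ℝ => s • x + t • y)
        (by fun_prop) ha hb key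
    rwa [closure_closure] at h2
  -- conclude
  have hScl : S ⊆ closure M := by
    intro y hy
    exact subset_closure (Set.mem_iUnion.mpr ⟨0, hy⟩)
  exact convexHull_min hScl hconv
end

section
/- (Gustin) Let k ≥ 1 and let V ⊆ ℝ^k be an arbitrary set. Then int(conv(V)) = ⋃ { int(conv(U)) : U ⊆ V, |U| ≤ 2k }, i.e., the interior of the convex hull of V is the union of the interiors of the convex hulls of all subsets of V of cardinality at most 2k. -/
open Set Pointwise

namespace GustinAux

variable {k : ℕ}

/-- Membership in the conical hull, phrased concretely. -/
def InCone (U : Set (Fin k → ℝ)) (p : Fin k → ℝ) : Prop :=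
  ∃ (t : Finset (Fin k → ℝ)) (f : (Fin k → ℝ) → ℝ),
    ↑t ⊆ U ∧ (∀ x ∈ t, 0 ≤ f x) ∧ ∑ x ∈ t, f x • x = p

lemma sum_ite_union {M : Type*} [AddCommMonoid M] (t s : Finset (Fin k → ℝ))
    (f g : (Fin k → ℝ) → M) :
    ∑ x ∈ t ∪ s, ((if x ∈ t then f x else 0) + (if x ∈ s then g x else 0))
      = ∑ x ∈ t, f x + ∑ x ∈ s, g x := by
  rw [Finset.sum_add_distrib, Finset.sum_ite_mem, Finset.sum_ite_mem,
    Finset.union_inter_cancel_left, Finset.union_inter_cancel_right]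

lemma InCone.mono {U U' : Set (Fin k → ℝ)} {p} (h : InCone U p) (hUU' : U ⊆ U') :
    InCone U' p := by
  obtain ⟨t, f, h1, h2, h3⟩ := h
  exact ⟨t, f, h1.trans hUU', h2, h3⟩

lemma InCone.smul {U : Set (Fin k → ℝ)} {p} {c : ℝ} (h : InCone U p) (hc : 0 ≤ c) :
    InCone U (c • p) := by
  obtain ⟨t, f, h1, h2, h3⟩ := h
  refine ⟨t, fun x => c * f x, h1, fun x hx => mul_nonneg hc (h2 x hx), ?_⟩
  rw [← h3, Finset.smul_sum]
  simp [mul_smul]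

lemma InCone.add {U : Set (Fin k → ℝ)} {p q} (hp : InCone U p) (hq : InCone U q) :
    InCone U (p + q) := by
  obtain ⟨t, f, ht, hf, hfs⟩ := hp
  obtain ⟨s, g, hs, hg, hgs⟩ := hq
  refine ⟨t ∪ s, fun x => (if x ∈ t then f x else 0) + (if x ∈ s then g x else 0), ?_, ?_, ?_⟩
  · rw [Finset.coe_union]; exact union_subset ht hs
  · intro x hx
    have h1 : (0:ℝ) ≤ if x ∈ t then f x else 0 := by
      split_ifs with h; exacts [hf x h, le_rfl]
    have h2 : (0:ℝ) ≤ if x ∈ s then g x else 0 := by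
      split_ifs with h; exacts [hg x h, le_rfl]
    exact add_nonneg h1 h2
  · simp only [add_smul, ite_smul, zero_smul]
    rw [sum_ite_union t s (fun x => f x • x) (fun x => g x • x), hfs, hgs]

lemma inCone_of_mem_convexHull {U : Set (Fin k → ℝ)} {p} (hp : p ∈ convexHull ℝ U) :
    InCone U p := by
  have h : convexHull ℝ U ⊆ {q | InCone U q} := by
    apply convexHull_min
    · intro x hx
      exact ⟨{x}, fun _ => 1, by simpa, by simp, by simp⟩
    · intro x hx y hy a b ha hb hab
      exact (hx.smul ha).add (hy.smul hb)
  exact h hp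

lemma inCone_span {U : Set (Fin k → ℝ)} {p} (hp : InCone U p) :
    p ∈ Submodule.span ℝ U := by
  obtain ⟨t, f, ht, hf, hfs⟩ := hp
  rw [← hfs]
  exact Submodule.sum_mem _ fun x hx =>
    Submodule.smul_mem _ _ (Submodule.subset_span (ht hx))

lemma exists_relation {t : Finset (Fin k → ℝ)} (h : k < t.card) :
    ∃ g : (Fin k → ℝ) → ℝ, ∑ x ∈ t, g x • x = 0 ∧ ∃ x ∈ t, 0 < g x := by
  by_contra hcon
  push_neg at hcon
  have hind : LinearIndependent ℝ (fun x => (x : Fin k → ℝ) : t → (Fin k → ℝ)) := by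
    rw [Fintype.linearIndependent_iff]
    intro g hg
    set G : (Fin k → ℝ) → ℝ := fun x => if h : x ∈ t then g ⟨x, h⟩ else 0 with hG
    have hsum0 : ∑ x ∈ t, G x • x = 0 := by
      rw [← Finset.sum_attach t (fun x => G x • x)]
      rw [Finset.univ_eq_attach] at hg
      rw [← hg]
      exact Finset.sum_congr rfl fun i _ => by simp [hG, dif_pos i.2]
    have h1 := hcon G hsum0
    have h2 := hcon (fun x => -G x) (by
      have hh : ∑ x ∈ t, (fun x => -G x) x • x = -∑ x ∈ t, G x • x := by
        simp [neg_smul]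
      rw [hh, hsum0, neg_zero])
    intro i
    have e1 := h1 i i.2
    have e2 := h2 i i.2
    simp only [neg_nonpos] at e2
    have : G ↑i = 0 := le_antisymm e1 e2
    simpa [hG, dif_pos i.2] using this
  have hle := hind.finset_card_le_finrank
  rw [Module.finrank_fin_fun] at hle
  omega

lemma cara_aux : ∀ (n : ℕ) (t : Finset (Fin k → ℝ)) (f : (Fin k → ℝ) → ℝ), t.card ≤ n →
    (∀ x ∈ t, 0 ≤ f x) →
    ∃ (t' : Finset (Fin k → ℝ)) (f' : (Fin k → ℝ) → ℝ), t' ⊆ t ∧ (∀ x ∈ t', 0 ≤ f' x) ∧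
      ∑ x ∈ t', f' x • x = ∑ x ∈ t, f x • x ∧ t'.card ≤ k := by
  intro n
  induction n with
  | zero =>
    intro t f hcard hf
    exact ⟨t, f, subset_rfl, hf, rfl, hcard.trans (Nat.zero_le k)⟩
  | succ n ih =>
    intro t f hcard hf
    by_cases hct : t.card ≤ k
    · exact ⟨t, f, subset_rfl, hf, rfl, hct⟩
    · obtain ⟨g, hg0, x₀, hx₀t, hgx₀⟩ := exists_relation (lt_of_not_ge hct)
      have hS : x₀ ∈ t.filter (fun x => 0 < g x) := Finset.mem_filter.2 ⟨hx₀t, hgx₀⟩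
      obtain ⟨x₁, hx₁S, hmin⟩ :=
        (t.filter (fun x => 0 < g x)).exists_min_image (fun x => f x / g x) ⟨x₀, hS⟩
      obtain ⟨hx₁t, hgx₁⟩ := Finset.mem_filter.1 hx₁S
      set lam := f x₁ / g x₁ with hlam
      have hlam0 : 0 ≤ lam := div_nonneg (hf x₁ hx₁t) hgx₁.le
      set f' : (Fin k → ℝ) → ℝ := fun x => f x - lam * g x with hf'def
      have hf' : ∀ x ∈ t, 0 ≤ f' x := by
        intro x hx
        show 0 ≤ f x - lam * g x
        by_cases hgx : 0 < g x
        · have h3 := hmin x (Finset.mem_filter.2 ⟨hx, hgx⟩)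
          have h4 := (le_div_iff₀ hgx).1 h3
          linarith
        · have h3 : lam * g x ≤ 0 := mul_nonpos_of_nonneg_of_nonpos hlam0 (not_lt.1 hgx)
          have h4 := hf x hx
          linarith
      have hsum' : ∑ x ∈ t, f' x • x = ∑ x ∈ t, f x • x := by
        simp only [hf'def, sub_smul, Finset.sum_sub_distrib, mul_smul]
        rw [← Finset.smul_sum, hg0, smul_zero, sub_zero]
      have hx₁0 : f' x₁ • x₁ = 0 := by
        have : f' x₁ = 0 := by
          show f x₁ - lam * g x₁ = 0
          rw [hlam, div_mul_cancel₀ _ (ne_of_gt hgx₁), sub_self]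
        rw [this, zero_smul]
      have herase : ∑ x ∈ t.erase x₁, f' x • x = ∑ x ∈ t, f x • x := by
        rw [Finset.sum_erase (f := fun x => f' x • x) t hx₁0, hsum']
      have hcard' : (t.erase x₁).card ≤ n := by
        rw [Finset.card_erase_of_mem hx₁t]; omega
      obtain ⟨t'', f'', hsub, hnn, hs, hc⟩ := ih (t.erase x₁) f' hcard'
        (fun x hx => hf' x (Finset.mem_of_mem_erase hx))
      exact ⟨t'', f'', hsub.trans (Finset.erase_subset _ _), hnn, hs.trans herase, hc⟩

lemma InCone.cara {U : Set (Fin k → ℝ)} {p} (h : InCone U p) :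
    ∃ (t : Finset (Fin k → ℝ)) (f : (Fin k → ℝ) → ℝ),
      ↑t ⊆ U ∧ (∀ x ∈ t, 0 ≤ f x) ∧ ∑ x ∈ t, f x • x = p ∧ t.card ≤ k := by
  obtain ⟨t, f, htU, hf, hsum⟩ := h
  obtain ⟨t', f', hsub, hf', hsum', hcard⟩ := cara_aux t.card t f le_rfl hf
  exact ⟨t', f', (Finset.coe_subset.2 hsub).trans htU, hf', hsum'.trans hsum, hcard⟩

lemma pm_comb {E' : Type*} [AddCommGroup E'] [Module ℝ E'] (a c₁ c₂ : ℝ)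
    (hc₁ : c₁ ≠ 0) (hc₂ : c₂ ≠ 0) (v : E') :
    (max a 0 / c₁) • (c₁ • v) + (max (-a) 0 / c₂) • (c₂ • (-v)) = a • v := by
  rw [smul_smul, smul_smul, div_mul_cancel₀ _ hc₁, div_mul_cancel₀ _ hc₂, smul_neg,
    ← sub_eq_add_neg, ← sub_smul, max_zero_sub_max_neg_zero_eq_self]

lemma scale_mem {U : Set (Fin k → ℝ)} (h0 : (0:Fin k → ℝ) ∈ convexHull ℝ U)
    {p : Fin k → ℝ} (hp : InCone U p) : ∃ c : ℝ, 0 < c ∧ c • p ∈ convexHull ℝ U := by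
  obtain ⟨t, f, htU, hf, hsum⟩ := hp
  set T := ∑ x ∈ t, f x with hT
  have hT0 : 0 ≤ T := Finset.sum_nonneg hf
  rcases eq_or_lt_of_le hT0 with hTz | hTp
  · have hz : ∀ x ∈ t, f x = 0 := (Finset.sum_eq_zero_iff_of_nonneg hf).1 hTz.symm
    have hp0 : p = 0 := by
      rw [← hsum]
      exact Finset.sum_eq_zero fun x hx => by rw [hz x hx, zero_smul]
    exact ⟨1, one_pos, by rw [hp0, smul_zero]; exact h0⟩
  · refine ⟨(T+1)⁻¹, by positivity, ?_⟩
    have hz : t.centerMass f id ∈ convexHull ℝ U :=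
      Finset.centerMass_mem_convexHull t hf (by rw [← hT]; exact hTp) fun x hx => htU hx
    have hcm : t.centerMass f id = T⁻¹ • p := by
      simp only [Finset.centerMass, id_eq, ← hT, hsum]
    have hconv := convex_convexHull ℝ U
    have hmem := hconv hz h0 (a := T/(T+1)) (b := (T+1)⁻¹)
      (by positivity) (by positivity) (by field_simp)
    have heq : (T/(T+1)) • t.centerMass f id + (T+1)⁻¹ • (0:Fin k → ℝ)
        = (T+1)⁻¹ • p := by
      rw [hcm, smul_zero, add_zero, smul_smul]
      congr 1
      field_simp
    rwa [heq] at hmem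

lemma key (hk : 1 ≤ k) (W : Set (Fin k → ℝ))
    (h0 : (0:Fin k → ℝ) ∈ interior (convexHull ℝ W)) :
    ∃ U : Set (Fin k → ℝ), U ⊆ W ∧ U.encard ≤ (2 * k : ℕ) ∧
      (0:Fin k → ℝ) ∈ interior (convexHull ℝ U) := by
  haveI : Nonempty (Fin k) := ⟨⟨0, hk⟩⟩
  obtain ⟨ε, hε, hball⟩ := Metric.mem_nhds_iff.1 (mem_interior_iff_mem_nhds.1 h0)
  have hcone : ∀ p : Fin k → ℝ, InCone W p := by
    intro p
    set c : ℝ := ε / (2 * (‖p‖ + 1)) with hc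
    have hc0 : 0 < c := by positivity
    have hmem : c • p ∈ convexHull ℝ W := by
      apply hball
      rw [Metric.mem_ball, dist_zero_right, norm_smul, Real.norm_of_nonneg hc0.le, hc,
        div_mul_eq_mul_div, div_lt_iff₀ (by positivity)]
      nlinarith [norm_nonneg p, hε]
    have h := (inCone_of_mem_convexHull hmem).smul (c := c⁻¹) (by positivity)
    rwa [smul_smul, inv_mul_cancel₀ (ne_of_gt hc0), one_smul] at h
  have hspan : Submodule.span ℝ W = ⊤ := by
    rw [eq_top_iff]
    exact fun p _ => inCone_span (hcone p)
  obtain ⟨b, hbW, hbspan, hbind⟩ := exists_linearIndependent ℝ W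
  rw [hspan] at hbspan
  have hbfin : b.Finite := hbind.setFinite
  set tb := hbfin.toFinset with htbdef
  have htb : (tb : Set (Fin k → ℝ)) = b := hbfin.coe_toFinset
  have hbind' : LinearIndependent ℝ (fun x : (tb : Set (Fin k → ℝ)) => (x : Fin k → ℝ)) := by
    rw [htb]; exact hbind
  have hbcard : tb.card ≤ k := by
    have h := LinearIndependent.finset_card_le_finrank hbind'
    rwa [Module.finrank_fin_fun] at h
  -- the auxiliary point
  set sp : Fin k → ℝ := -∑ x ∈ tb, x with hsp
  obtain ⟨t₀, f₀, ht₀W, hf₀, hs₀, hc₀⟩ := (hcone sp).cara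
  set tU := tb ∪ t₀ with htU
  set U : Set (Fin k → ℝ) := ↑tU with hU
  have hUW : U ⊆ W := by
    rw [hU, htU, Finset.coe_union, htb]
    exact union_subset hbW ht₀W
  have hUcard : U.encard ≤ (2 * k : ℕ) := by
    rw [hU, Set.encard_coe_eq_coe_finsetCard]
    have h1 : tU.card ≤ tb.card + t₀.card := Finset.card_union_le _ _
    have h2 : tU.card ≤ 2 * k := by omega
    exact_mod_cast h2
  have hbsum : ∀ p : Fin k → ℝ, p ∈ Submodule.span ℝ (↑tb : Set (Fin k → ℝ)) := by
    rw [htb, hbspan]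
    exact fun p => trivial
  have hconeU : ∀ p : Fin k → ℝ, InCone U p := by
    intro p
    obtain ⟨c, -, hcsum⟩ := Submodule.mem_span_finset.1 (hbsum p)
    set μ : ℝ := ∑ x ∈ tb, |c x| with hμ
    have hμ0 : 0 ≤ μ := Finset.sum_nonneg fun x _ => abs_nonneg _
    have hcμ : ∀ x ∈ tb, 0 ≤ c x + μ := by
      intro x hx
      have h1 : |c x| ≤ μ := Finset.single_le_sum (fun y _ => abs_nonneg (c y)) hx
      have h2 := neg_abs_le (c x)
      linarith
    have h1 : InCone U (∑ x ∈ tb, (c x + μ) • x) :=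
      ⟨tb, fun x => c x + μ, by rw [hU, htU, Finset.coe_union]; exact subset_union_left, hcμ, rfl⟩
    have h2 : InCone U (μ • sp) :=
      InCone.smul ⟨t₀, f₀, by rw [hU, htU, Finset.coe_union]; exact subset_union_right, hf₀, hs₀⟩ hμ0
    have hcomp : ∑ x ∈ tb, (c x + μ) • x + μ • sp = p := by
      rw [Finset.sum_congr rfl (fun x _ => add_smul (c x) μ x), Finset.sum_add_distrib,
        hcsum, ← Finset.smul_sum, hsp, smul_neg, add_neg_cancel_right]
    exact hcomp ▸ h1.add h2
  -- 0 is in the hull of U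
  set h : (Fin k → ℝ) → ℝ :=
    fun x => (if x ∈ tb then (1:ℝ) else 0) + (if x ∈ t₀ then f₀ x else 0) with hh
  have hsum0 : ∑ x ∈ tU, h x • x = 0 := by
    simp only [hh, add_smul, ite_smul, zero_smul]
    rw [htU, sum_ite_union tb t₀ (fun x => (1:ℝ) • x) (fun x => f₀ x • x)]
    simp only [one_smul]
    rw [hs₀, hsp, add_neg_cancel]
  have hwsum : ∑ x ∈ tU, h x = (tb.card : ℝ) + ∑ x ∈ t₀, f₀ x := by
    simp only [hh]
    rw [htU, sum_ite_union tb t₀ (fun _ => (1:ℝ)) f₀]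
    simp
  have htbne : tb.Nonempty := by
    by_contra hemp
    rw [Finset.not_nonempty_iff_eq_empty] at hemp
    rw [hemp, Finset.coe_empty] at htb
    rw [← htb, Submodule.span_empty] at hbspan
    exact absurd hbspan bot_ne_top
  have hpos : 0 < ∑ x ∈ tU, h x := by
    rw [hwsum]
    have h1 : (1:ℝ) ≤ (tb.card : ℝ) := by
      exact_mod_cast Finset.card_pos.2 htbne
    have h2 : 0 ≤ ∑ x ∈ t₀, f₀ x := Finset.sum_nonneg hf₀
    linarith
  have hnn : ∀ x ∈ tU, 0 ≤ h x := by
    intro x _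
    have h1 : (0:ℝ) ≤ if x ∈ tb then (1:ℝ) else 0 := by
      split_ifs; exacts [zero_le_one, le_rfl]
    have h2 : (0:ℝ) ≤ if x ∈ t₀ then f₀ x else 0 := by
      split_ifs with hyp; exacts [hf₀ x hyp, le_rfl]
    exact add_nonneg h1 h2
  have h0U : (0:Fin k → ℝ) ∈ convexHull ℝ U := by
    have hm := Finset.centerMass_mem_convexHull tU hnn hpos
      (fun x hx => (Finset.mem_coe.2 hx : x ∈ U))
    rw [Finset.centerMass] at hm
    rwa [hsum0, smul_zero] at hm
  -- points along coordinate directions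
  set e : Fin k → (Fin k → ℝ) := fun i => Pi.single i (1:ℝ) with he
  have hex : ∀ q : Fin k × Bool, ∃ c : ℝ, 0 < c ∧
      c • (cond q.2 (e q.1) (-(e q.1))) ∈ convexHull ℝ U :=
    fun q => scale_mem h0U (hconeU _)
  choose cc hcpos hcmem using hex
  set pts : Fin k × Bool → (Fin k → ℝ) :=
    fun q => cc q • (cond q.2 (e q.1) (-(e q.1))) with hpts
  set w : (Fin k → ℝ) → Fin k × Bool → ℝ :=
    fun y q => (cond q.2 (max (y q.1) 0) (max (-(y q.1)) 0)) / cc q with hw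
  have hwnn : ∀ y q, 0 ≤ w y q := by
    intro y q
    apply div_nonneg _ (hcpos q).le
    cases q.2 <;> simp [le_max_right]
  have hrep : ∀ y : Fin k → ℝ, ∑ q : Fin k × Bool, w y q • pts q = y := by
    intro y
    rw [Fintype.sum_prod_type]
    have hterm : ∀ i : Fin k, ∑ b : Bool, w y (i, b) • pts (i, b) = y i • e i := by
      intro i
      rw [Fintype.sum_bool]
      exact pm_comb (y i) _ _ (ne_of_gt (hcpos (i, true))) (ne_of_gt (hcpos (i, false))) (e i)
    rw [Finset.sum_congr rfl fun i _ => hterm i]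
    ext j
    rw [Finset.sum_apply]
    simp [he, Pi.single_apply]
  set g : (Fin k → ℝ) → ℝ := fun y => ∑ q : Fin k × Bool, w y q with hg
  have hgcont : Continuous g := by
    apply continuous_finset_sum
    intro q _
    rcases q with ⟨i, b⟩
    cases b
    · exact (((continuous_apply i).neg.max continuous_const).div_const _)
    · exact (((continuous_apply i).max continuous_const).div_const _)
  have hgnn : ∀ y, 0 ≤ g y := fun y => Finset.sum_nonneg fun q _ => hwnn y q
  have hNsub : {y : Fin k → ℝ | g y < 1} ⊆ convexHull ℝ U := by
    intro y hy
    rcases eq_or_lt_of_le (hgnn y) with hg0 | hg0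
    · have hz : ∀ q ∈ (Finset.univ : Finset (Fin k × Bool)), w y q = 0 :=
        (Finset.sum_eq_zero_iff_of_nonneg fun q _ => hwnn y q).1 hg0.symm
      have hy0 : y = 0 := by
        rw [← hrep y]
        exact Finset.sum_eq_zero fun q hq => by rw [hz q hq, zero_smul]
      rw [hy0]; exact h0U
    · have hzmem : Finset.univ.centerMass (w y) pts ∈ convexHull ℝ (convexHull ℝ U) :=
        Finset.centerMass_mem_convexHull _ (fun q _ => hwnn y q) hg0 (fun q _ => hcmem q)
      rw [(convex_convexHull ℝ U).convexHull_eq] at hzmem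
      have hcm : Finset.univ.centerMass (w y) pts = (g y)⁻¹ • y := by
        rw [Finset.centerMass, hrep y]
      rw [hcm] at hzmem
      have hconv := convex_convexHull ℝ U
      have hmem := hconv hzmem h0U (a := g y) (b := 1 - g y) (hgnn y)
        (by simp only [mem_setOf_eq] at hy; linarith) (by ring)
      rwa [smul_zero, add_zero, smul_smul, mul_inv_cancel₀ (ne_of_gt hg0), one_smul] at hmem
  refine ⟨U, hUW, hUcard, ?_⟩
  rw [mem_interior_iff_mem_nhds]
  apply Filter.mem_of_superset _ hNsub
  have hopen : IsOpen {y : Fin k → ℝ | g y < 1} := isOpen_lt hgcont continuous_const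
  apply hopen.mem_nhds
  simp only [mem_setOf_eq, hg, hw]
  have : ∀ q : Fin k × Bool, (cond q.2 (max ((0:Fin k → ℝ) q.1) 0) (max (-((0:Fin k → ℝ) q.1)) 0)) / cc q = 0 := by
    intro q
    cases q.2 <;> simp
  rw [Finset.sum_congr rfl fun q _ => this q]
  simp


end GustinAux

/-- Gustin's lemma: for any `V ⊆ ℝᵏ`, the interior of the convex hull of `V` is the
union of the interiors of the convex hulls of the subsets of `V` of cardinality `≤ 2k`. -/
theorem stmt9 {k : ℕ} (hk : 1 ≤ k) (V : Set (Fin k → ℝ)) :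
    interior (convexHull ℝ V) =
      ⋃ U ∈ {U : Set (Fin k → ℝ) | U ⊆ V ∧ U.encard ≤ (2 * k : ℕ)},
        interior (convexHull ℝ U) := by
  apply Set.Subset.antisymm
  · intro x hx
    have h0 : (0:Fin k → ℝ) ∈ interior (convexHull ℝ ((-x) +ᵥ V)) := by
      rw [convexHull_vadd, interior_vadd]
      exact ⟨x, hx, by simp⟩
    obtain ⟨U₀, hU₀sub, hU₀card, hU₀mem⟩ := GustinAux.key hk _ h0
    refine mem_iUnion₂.2 ⟨x +ᵥ U₀, ⟨?_, ?_⟩, ?_⟩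
    · intro y hy
      obtain ⟨u, hu, rfl⟩ := hy
      obtain ⟨v, hv, rfl⟩ := hU₀sub hu
      simpa using hv
    · rw [← Set.image_vadd,
        Function.Injective.encard_image (fun a b hab => by simpa [vadd_eq_add] using hab)]
      exact hU₀card
    · rw [convexHull_vadd, interior_vadd]
      exact ⟨0, hU₀mem, by simp⟩
  · exact iUnion₂_subset fun U hU => interior_mono (convexHull_mono hU.1)
end

section
/- Let k ≥ 1, let C ⊆ ℝ^k be a nonempty open convex set, let f : C → ℝ^k be a continuous injection with convex image, and let S ⊆ C be a k-dimensional set. Then f⁻¹[int(conv(f[S]))] ⊆ ⋃ { cl(f⁻¹[int(conv(f[T]))]) : T ⊆ S, |T| ≤ 2k }, where cl denotes closure in the relative topology of C. -/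
open Set Pointwise

/-- If `0` is a convex combination with strictly positive weights of a finite set `A`
whose affine span is everything, then `0` lies in the interior of the convex hull of `A`. -/
lemma aux_mem_interior_of_pos_combo {E : Type*} [NormedAddCommGroup E] [NormedSpace ℝ E]
    [FiniteDimensional ℝ E] (A : Finset E) (w : E → ℝ)
    (hw : ∀ p ∈ A, 0 < w p) (hsum : ∑ p ∈ A, w p = 1)
    (hcomb : ∑ p ∈ A, w p • p = 0) (hspan : affineSpan ℝ (A : Set E) = ⊤) :
    (0 : E) ∈ interior (convexHull ℝ (A : Set E)) := by
  classical
  have hne : A.Nonempty := by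
    rcases A.eq_empty_or_nonempty with h | h
    · exfalso; rw [h] at hsum; simp at hsum
    · exact h
  obtain ⟨c, hc⟩ : (interior (convexHull ℝ (A : Set E))).Nonempty :=
    interior_convexHull_nonempty_iff_affineSpan_eq_top.mpr hspan
  have hcA : c ∈ convexHull ℝ (A : Set E) := interior_subset hc
  obtain ⟨cw, hcw0, hcw1, hcwc⟩ := Finset.mem_convexHull.mp hcA
  rw [Finset.centerMass_eq_of_sum_1 _ _ hcw1] at hcwc
  simp only [id_eq] at hcwc
  set m : ℝ := A.inf' hne w with hm
  have hmpos : 0 < m := by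
    rw [hm, Finset.lt_inf'_iff]
    exact hw
  have hcw_le_one : ∀ p ∈ A, cw p ≤ 1 := by
    intro p hp
    calc cw p ≤ ∑ q ∈ A, cw q := Finset.single_le_sum hcw0 hp
    _ = 1 := hcw1
  have hw_le_one : ∀ p ∈ A, w p ≤ 1 := by
    intro p hp
    calc w p ≤ ∑ q ∈ A, w q := Finset.single_le_sum (fun q hq => (hw q hq).le) hp
    _ = 1 := hsum
  set δ : ℝ := m / 2 with hδ
  have hδpos : 0 < δ := by positivity
  have hδlt1 : δ < 1 := by
    obtain ⟨p0, hp0⟩ := hne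
    have h1 : m ≤ w p0 := Finset.inf'_le _ hp0
    have h2 := hw_le_one p0 hp0
    rw [hδ]; linarith
  have honeδ : (0:ℝ) < 1 - δ := by linarith
  set w2 : E → ℝ := fun p => (w p - δ * cw p) / (1 - δ) with hw2
  have hw2nonneg : ∀ p ∈ A, 0 ≤ w2 p := by
    intro p hp
    have h1 : m ≤ w p := Finset.inf'_le _ hp
    have h2 : δ * cw p ≤ δ := by
      have := hcw_le_one p hp
      nlinarith [hcw0 p hp]
    have hnum : 0 ≤ w p - δ * cw p := by
      have : δ ≤ m := by rw [hδ]; linarith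
      linarith
    exact div_nonneg hnum honeδ.le
  have hw2sum : ∑ p ∈ A, w2 p = 1 := by
    simp only [hw2]
    rw [← Finset.sum_div, Finset.sum_sub_distrib, ← Finset.mul_sum, hsum, hcw1]
    field_simp
  have hw2comb : ∑ p ∈ A, w2 p • p = (-(δ / (1 - δ))) • c := by
    have hpt : ∀ p ∈ A, w2 p • p
        = (1 - δ)⁻¹ • (w p • p) - ((1-δ)⁻¹ * δ) • (cw p • p) := by
      intro p hp
      simp only [hw2]
      match_scalars
      field_simp
    rw [Finset.sum_congr rfl hpt, Finset.sum_sub_distrib, ← Finset.smul_sum, ← Finset.smul_sum,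
      hcomb, hcwc, smul_zero, zero_sub, ← neg_smul]
    congr 1
    rw [div_eq_mul_inv, mul_comm]
  have hqmem : (-(δ / (1 - δ))) • c ∈ convexHull ℝ (A : Set E) := by
    have hmem := A.centerMass_id_mem_convexHull hw2nonneg (by rw [hw2sum]; norm_num)
    rw [Finset.centerMass_eq_of_sum_1 _ _ hw2sum] at hmem
    simp only [id_eq] at hmem
    rw [← hw2comb]
    exact hmem
  have hkey := (convex_convexHull ℝ (A : Set E)).combo_closure_interior_mem_interior
    (subset_closure hqmem) hc (by linarith : (0:ℝ) ≤ 1 - δ) hδpos (by ring)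
  have hzero : (1 - δ) • ((-(δ / (1 - δ))) • c) + δ • c = (0 : E) := by
    rw [smul_smul]
    have h1 : (1 - δ) * (-(δ / (1 - δ))) = -δ := by
      rw [mul_comm, ← neg_div, div_mul_cancel₀ _ (ne_of_gt honeδ)]
    rw [h1, neg_smul, neg_add_cancel]
  rwa [hzero] at hkey

/-- **Steinitz's theorem** (at the origin): if `0` is in the interior of the convex hull of a
set `A` in a normed space of positive finite dimension `n`, then `0` is in the interior of the
convex hull of at most `2 * n` points of `A`. -/
lemma steinitz_zero {E : Type*} [NormedAddCommGroup E] [NormedSpace ℝ E]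
    [FiniteDimensional ℝ E] (hE : 0 < Module.finrank ℝ E) (A : Set E)
    (h0 : (0 : E) ∈ interior (convexHull ℝ A)) :
    ∃ Y : Finset E, ↑Y ⊆ A ∧ Y.card ≤ 2 * Module.finrank ℝ E ∧
      (0 : E) ∈ interior (convexHull ℝ (Y : Set E)) := by
  classical
  set n := Module.finrank ℝ E with hn
  -- Step 1: reduce to a finite subset `X` of `A`
  obtain ⟨b, hb0, hbsub⟩ :=
    exists_mem_interior_convexHull_affineBasis (isOpen_interior.mem_nhds h0)
  have hbi : ∀ i, b i ∈ convexHull ℝ A := fun i =>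
    interior_subset (hbsub (subset_convexHull ℝ _ (mem_range_self i)))
  have hfin : ∀ i, ∃ t : Finset E, ↑t ⊆ A ∧ b i ∈ convexHull ℝ (t : Set E) := by
    intro i
    have h := hbi i
    rw [convexHull_eq_union_convexHull_finite_subsets] at h
    simpa using h
  choose t ht1 ht2 using hfin
  set X : Finset E := Finset.univ.biUnion t with hX
  have hXA : (X : Set E) ⊆ A := by
    intro p hp
    simp only [hX, Finset.coe_biUnion, Finset.coe_univ, Set.mem_univ, Set.iUnion_true,
      Set.mem_iUnion] at hp
    obtain ⟨i, hi⟩ := hp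
    exact ht1 i hi
  have hX0 : (0 : E) ∈ interior (convexHull ℝ (X : Set E)) := by
    apply interior_mono _ hb0
    apply convexHull_min _ (convex_convexHull ℝ _)
    rintro _ ⟨i, rfl⟩
    exact convexHull_mono (Finset.coe_subset.mpr (Finset.subset_biUnion_of_mem t
      (Finset.mem_univ i))) (ht2 i)
  have hXconv0 : (0 : E) ∈ convexHull ℝ (X : Set E) := interior_subset hX0
  -- Step 2: the linear span of `X` is everything
  have hXtop : Submodule.span ℝ (X : Set E) = ⊤ := by
    have haff : affineSpan ℝ (X : Set E) = ⊤ :=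
      affineSpan_eq_top_of_nonempty_interior ⟨0, hX0⟩
    rw [Submodule.eq_top_iff']
    intro x
    have hx : x ∈ affineSpan ℝ (X : Set E) := by rw [haff]; trivial
    have hle : affineSpan ℝ (X : Set E) ≤ (Submodule.span ℝ (X : Set E)).toAffineSubspace :=
      affineSpan_le.mpr Submodule.subset_span
    exact (Submodule.mem_toAffineSubspace).mp (hle hx)
  -- Step 3: a linear basis of `E` inside `X`
  obtain ⟨B, hBX, hBspan, hBli⟩ := exists_linearIndependent ℝ (X : Set E)
  rw [hXtop] at hBspan
  have hBfin : B.Finite := hBli.setFinite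
  set Bf : Finset E := hBfin.toFinset with hBf
  have hBcoe : (Bf : Set E) = B := hBfin.coe_toFinset
  have hBcard : Bf.card ≤ n := by
    have hli2 := hBli
    rw [← hBcoe] at hli2
    exact LinearIndependent.finset_card_le_finrank hli2
  haveI : Nontrivial E := Module.finrank_pos_iff.mp hE
  have hBne : Bf.Nonempty := by
    rcases Bf.eq_empty_or_nonempty with h | h
    · exfalso
      have hBe : B = ∅ := by rw [← hBcoe, h]; simp
      rw [hBe, Submodule.span_empty] at hBspan
      obtain ⟨v, hv⟩ := exists_ne (0 : E)
      have : v ∈ (⊥ : Submodule ℝ E) := by rw [hBspan]; trivial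
      exact hv (Submodule.mem_bot ℝ |>.mp this)
    · exact h
  set sb : E := ∑ p ∈ Bf, p with hsb
  have hsbne : sb ≠ 0 := by
    intro h
    obtain ⟨p0, hp0⟩ := hBne
    have hadd := Finset.add_sum_erase Bf id hp0
    simp only [id_eq] at hadd
    rw [← hsb, h] at hadd
    have herase : p0 = -∑ p ∈ Bf.erase p0, p := eq_neg_of_add_eq_zero_left hadd
    have hspan' : Submodule.span ℝ ((Bf.erase p0 : Finset E) : Set E) = ⊤ := by
      rw [eq_top_iff, ← hBspan, ← hBcoe]
      apply Submodule.span_le.mpr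
      intro q hq
      rcases eq_or_ne q p0 with rfl | hqne
      · have hmem : -∑ p ∈ Bf.erase q, p
            ∈ Submodule.span ℝ ((Bf.erase q : Finset E) : Set E) :=
          Submodule.neg_mem _ (Submodule.sum_mem _ fun p hp =>
            Submodule.subset_span (Finset.mem_coe.mpr hp))
        rw [← herase] at hmem
        exact hmem
      · exact Submodule.subset_span (Finset.mem_coe.mpr
          (Finset.mem_erase.mpr ⟨hqne, Finset.mem_coe.mp hq⟩))
    have h1 : n ≤ (Bf.erase p0).card := by
      have hle : Module.finrank ℝ
          (Submodule.span ℝ ((Bf.erase p0 : Finset E) : Set E)) ≤ (Bf.erase p0).card :=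
        finrank_span_finset_le_card (Bf.erase p0)
      rw [hspan', finrank_top] at hle
      exact hle
    have h2 : (Bf.erase p0).card = Bf.card - 1 := Finset.card_erase_of_mem hp0
    have h3 : 1 ≤ Bf.card := Finset.card_pos.mpr ⟨p0, hp0⟩
    omega
  set u : E := -sb with hu
  have hune : u ≠ 0 := by simpa [hu] using hsbne
  have hunorm : (0:ℝ) < ‖u‖ := norm_pos_iff.mpr hune
  -- Step 4: the ray in direction `u` exits the convex hull at `z`
  set Q : Set ℝ := {s : ℝ | 0 ≤ s ∧ s • u ∈ convexHull ℝ (X : Set E)} with hQ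
  have hQ0 : (0:ℝ) ∈ Q := ⟨le_refl _, by rw [zero_smul]; exact hXconv0⟩
  have hcompact : IsCompact (convexHull ℝ (X : Set E)) :=
    (X.finite_toSet).isCompact_convexHull (𝕜 := ℝ)
  obtain ⟨R, hR⟩ := hcompact.isBounded.subset_closedBall 0
  have hQbdd : BddAbove Q := by
    refine ⟨R / ‖u‖, fun s hs => ?_⟩
    have h1 : s • u ∈ Metric.closedBall (0:E) R := hR hs.2
    rw [Metric.mem_closedBall, dist_zero_right, norm_smul, Real.norm_eq_abs,
      abs_of_nonneg hs.1] at h1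
    rw [le_div_iff₀ hunorm]
    exact h1
  have hQclosed : IsClosed Q := by
    have hQeq : Q = Set.Ici (0:ℝ) ∩ (fun s : ℝ => s • u) ⁻¹' (convexHull ℝ (X : Set E)) := rfl
    rw [hQeq]
    exact isClosed_Ici.inter (hcompact.isClosed.preimage (continuous_id.smul continuous_const))
  set ts : ℝ := sSup Q with hts
  have htsQ : ts ∈ Q := hQclosed.csSup_mem ⟨0, hQ0⟩ hQbdd
  have htspos : 0 < ts := by
    obtain ⟨ε, hεpos, hεball⟩ := Metric.mem_nhds_iff.mp (mem_interior_iff_mem_nhds.mp hX0)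
    set d : ℝ := ε / (2 * ‖u‖) with hd
    have hdpos : 0 < d := by positivity
    have hdQ : d ∈ Q := by
      refine ⟨hdpos.le, hεball ?_⟩
      rw [mem_ball_zero_iff, norm_smul, Real.norm_eq_abs, abs_of_nonneg hdpos.le, hd]
      have hune' : ‖u‖ ≠ 0 := ne_of_gt hunorm
      have heq : ε / (2 * ‖u‖) * ‖u‖ = ε / 2 := by
        field_simp
      rw [heq]
      linarith
    calc (0:ℝ) < d := hdpos
    _ ≤ ts := le_csSup hQbdd hdQ
  set z : E := ts • u with hz
  have hzconv : z ∈ convexHull ℝ (X : Set E) := htsQ.2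
  have hznotint : z ∉ interior (convexHull ℝ (X : Set E)) := by
    intro h
    obtain ⟨ε, hεpos, hεball⟩ := Metric.mem_nhds_iff.mp (mem_interior_iff_mem_nhds.mp h)
    set d : ℝ := ε / (2 * ‖u‖) with hd
    have hdpos : 0 < d := by positivity
    have ht' : ts + d ∈ Q := by
      refine ⟨by linarith [htsQ.1], hεball ?_⟩
      rw [Metric.mem_ball, dist_eq_norm]
      have hdiff : (ts + d) • u - z = d • u := by rw [hz]; module
      rw [hdiff, norm_smul, Real.norm_eq_abs, abs_of_nonneg hdpos.le, hd]
      have hune' : ‖u‖ ≠ 0 := ne_of_gt hunorm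
      have heq : ε / (2 * ‖u‖) * ‖u‖ = ε / 2 := by
        field_simp
      rw [heq]
      linarith
    have : ts + d ≤ ts := le_csSup hQbdd ht'
    linarith
  -- Step 5: separating functional at `z`
  obtain ⟨φ, hφ⟩ := geometric_hahn_banach_open_point
    ((convex_convexHull ℝ (X : Set E)).interior) isOpen_interior hznotint
  have hφz0 : 0 < φ z := by
    have := hφ 0 hX0
    rwa [map_zero] at this
  have hφle : ∀ p ∈ convexHull ℝ (X : Set E), φ p ≤ φ z := by
    intro p hp
    by_contra hlt
    push_neg at hlt
    have key : ∀ s : ℝ, 0 < s → s ≤ 1 → (1 - s) * φ p < φ z := by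
      intro s hs0 hs1
      have hmem : (1 - s) • p + s • (0:E) ∈ interior (convexHull ℝ (X : Set E)) :=
        (convex_convexHull ℝ (X : Set E)).combo_closure_interior_mem_interior
          (subset_closure hp) hX0 (by linarith) hs0 (by ring)
      have := hφ _ hmem
      rwa [map_add, map_smul, map_smul, map_zero, smul_zero, add_zero, smul_eq_mul] at this
    have hppos : 0 < φ p := lt_trans hφz0 hlt
    have hs0 : 0 < (φ p - φ z) / (2 * φ p) := by
      apply div_pos (by linarith) (by positivity)
    have hs1 : (φ p - φ z) / (2 * φ p) ≤ 1 := by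
      rw [div_le_one (by positivity)]
      linarith
    have hkey := key _ hs0 hs1
    have hexp : (1 - (φ p - φ z) / (2 * φ p)) * φ p = φ p - (φ p - φ z)/2 := by
      field_simp
    rw [hexp] at hkey
    linarith
  -- Step 6: `z` is in the hull of the points of `X` on the supporting hyperplane
  obtain ⟨w, hw0, hw1, hwz⟩ := Finset.mem_convexHull.mp hzconv
  rw [Finset.centerMass_eq_of_sum_1 _ _ hw1] at hwz
  simp only [id_eq] at hwz
  set F : Finset E := X.filter (fun p => φ p = φ z) with hF
  have hsupp : ∀ p ∈ X, w p ≠ 0 → φ p = φ z := by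
    intro p hp hwp
    by_contra hne
    have hplt : φ p < φ z :=
      lt_of_le_of_ne (hφle p (subset_convexHull ℝ _ hp)) hne
    have hstrict : ∑ q ∈ X, w q * φ q < ∑ q ∈ X, w q * φ z := by
      apply Finset.sum_lt_sum
      · intro q hq
        exact mul_le_mul_of_nonneg_left (hφle q (subset_convexHull ℝ _ hq)) (hw0 q hq)
      · exact ⟨p, hp, mul_lt_mul_of_pos_left hplt
          (lt_of_le_of_ne (hw0 p hp) (Ne.symm hwp))⟩
    have hL : ∑ q ∈ X, w q * φ q = φ z := by
      rw [← hwz, map_sum]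
      apply Finset.sum_congr rfl
      intro q _
      rw [map_smul, smul_eq_mul]
    have hRR : ∑ q ∈ X, w q * φ z = φ z := by
      rw [← Finset.sum_mul, hw1, one_mul]
    rw [hL, hRR] at hstrict
    exact lt_irrefl _ hstrict
  have hwF1 : ∑ q ∈ F, w q = 1 := by
    rw [hF, Finset.sum_filter_of_ne (fun q hq h => hsupp q hq h)]
    exact hw1
  have hwFz : ∑ q ∈ F, w q • q = z := by
    rw [hF, Finset.sum_filter_of_ne]
    · exact hwz
    · intro q hq h
      apply hsupp q hq
      intro h0
      rw [h0, zero_smul] at h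
      exact h rfl
  have hzF : z ∈ convexHull ℝ (F : Set E) := by
    apply Finset.mem_convexHull.mpr
    refine ⟨w, fun q hq => hw0 q (Finset.filter_subset _ _ hq), hwF1, ?_⟩
    rw [Finset.centerMass_eq_of_sum_1 _ _ hwF1]
    simpa only [id_eq] using hwFz
  -- Step 7: Carathéodory inside the hyperplane: `z ∈ conv G`, `|G| ≤ n`
  rw [convexHull_eq_union] at hzF
  simp only [Set.mem_iUnion] at hzF
  obtain ⟨G, hGF, hGai, hzG⟩ := hzF
  have hGcard : G.card ≤ n := by
    have h1 := hGai.card_le_finrank_succ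
    rw [Fintype.card_coe] at h1
    have hrange : Set.range (Subtype.val : ↥G → E) = (G : Set E) := Subtype.range_coe
    rw [hrange] at h1
    have hker : vectorSpan ℝ (G : Set E) ≤ LinearMap.ker (φ : E →ₗ[ℝ] ℝ) := by
      rw [vectorSpan_def]
      apply Submodule.span_le.mpr
      rintro v ⟨a, ha, e, he, rfl⟩
      have hae : φ a = φ z := (Finset.mem_filter.mp (Finset.mem_coe.mp (hGF ha))).2
      have hbe : φ e = φ z := (Finset.mem_filter.mp (Finset.mem_coe.mp (hGF he))).2
      simp only [SetLike.mem_coe, LinearMap.mem_ker, vsub_eq_sub, ContinuousLinearMap.coe_coe]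
      rw [map_sub, hae, hbe, sub_self]
    have hkerne : LinearMap.ker (φ : E →ₗ[ℝ] ℝ) ≠ ⊤ := by
      intro hkt
      have hz0 : φ z = 0 := by
        have : z ∈ LinearMap.ker (φ : E →ₗ[ℝ] ℝ) := by rw [hkt]; trivial
        simpa using this
      linarith
    have h2 : Module.finrank ℝ (vectorSpan ℝ (G : Set E)) ≤ Module.finrank ℝ (LinearMap.ker (φ : E →ₗ[ℝ] ℝ)) :=
      Submodule.finrank_mono hker
    have h3 : Module.finrank ℝ (LinearMap.ker (φ : E →ₗ[ℝ] ℝ)) < n :=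
      Submodule.finrank_lt hkerne
    omega
  obtain ⟨γ, hγ0, hγ1, hγz⟩ := Finset.mem_convexHull.mp hzG
  rw [Finset.centerMass_eq_of_sum_1 _ _ hγ1] at hγz
  simp only [id_eq] at hγz
  -- Step 8: combine `Bf` and the support of `γ` in `G`
  set Gp : Finset E := G.filter (fun g => γ g ≠ 0) with hGp
  set A' : Finset E := Bf ∪ Gp with hA'
  set cc : ℝ := ts * Bf.card + 1 with hcc
  have hccpos : 0 < cc := by
    have h1 : (0:ℝ) ≤ ts * Bf.card := mul_nonneg htspos.le (Nat.cast_nonneg _)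
    rw [hcc]; linarith
  set W : E → ℝ := fun p => ((if p ∈ Bf then ts else 0) + (if p ∈ Gp then γ p else 0)) / cc
    with hW
  have hBfA' : Bf ⊆ A' := Finset.subset_union_left
  have hGpA' : Gp ⊆ A' := Finset.subset_union_right
  have hsum1 : ∑ p ∈ A', (if p ∈ Bf then ts else 0) = ts * Bf.card := by
    rw [Finset.sum_ite_mem, Finset.inter_eq_right.mpr hBfA', Finset.sum_const,
      nsmul_eq_mul, mul_comm]
  have hγsum : ∑ p ∈ Gp, γ p = 1 := by
    rw [hGp, Finset.sum_filter_of_ne (fun q _ h => h)]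
    exact hγ1
  have hγvec : ∑ p ∈ Gp, γ p • p = z := by
    rw [hGp, Finset.sum_filter_of_ne]
    · exact hγz
    · intro q _ h h0
      rw [h0, zero_smul] at h
      exact h rfl
  have hsum2 : ∑ p ∈ A', (if p ∈ Gp then γ p else 0) = 1 := by
    rw [Finset.sum_ite_mem, Finset.inter_eq_right.mpr hGpA', hγsum]
  have hWsum : ∑ p ∈ A', W p = 1 := by
    simp only [hW]
    rw [← Finset.sum_div, Finset.sum_add_distrib, hsum1, hsum2, ← hcc,
      div_self (ne_of_gt hccpos)]
  have hvec1 : ∑ p ∈ A', ((if p ∈ Bf then ts else 0) • p) = ts • sb := by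
    have hite : ∀ p ∈ A', (if p ∈ Bf then ts else 0) • p = (if p ∈ Bf then ts • p else 0) := by
      intro p _
      split_ifs <;> simp
    rw [Finset.sum_congr rfl hite, Finset.sum_ite_mem, Finset.inter_eq_right.mpr hBfA', hsb,
      Finset.smul_sum]
  have hvec2 : ∑ p ∈ A', ((if p ∈ Gp then γ p else 0) • p) = z := by
    have hite : ∀ p ∈ A', (if p ∈ Gp then γ p else 0) • p = (if p ∈ Gp then γ p • p else 0) := by
      intro p _
      split_ifs <;> simp
    rw [Finset.sum_congr rfl hite, Finset.sum_ite_mem, Finset.inter_eq_right.mpr hGpA', hγvec]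
  have hWvec : ∑ p ∈ A', W p • p = 0 := by
    have hpt : ∀ p ∈ A', W p • p
        = cc⁻¹ • ((if p ∈ Bf then ts else 0) • p + (if p ∈ Gp then γ p else 0) • p) := by
      intro p _
      simp only [hW]
      rw [div_eq_inv_mul, mul_smul, add_smul]
    rw [Finset.sum_congr rfl hpt, ← Finset.smul_sum, Finset.sum_add_distrib, hvec1, hvec2,
      hz, hu, smul_neg]
    simp
  have hWpos : ∀ p ∈ A', 0 < W p := by
    intro p hp
    simp only [hW]
    apply div_pos _ hccpos
    have h2 : 0 ≤ (if p ∈ Gp then γ p else 0) := by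
      split_ifs with h
      · exact hγ0 p (Finset.filter_subset _ _ h)
      · exact le_refl 0
    have h1 : 0 ≤ (if p ∈ Bf then ts else 0) := by
      split_ifs
      · exact htspos.le
      · exact le_refl 0
    rcases Finset.mem_union.mp hp with h | h
    · rw [if_pos h]
      linarith
    · rw [if_pos h]
      have hγp : 0 < γ p :=
        lt_of_le_of_ne (hγ0 p (Finset.filter_subset _ _ h))
          (Ne.symm (Finset.mem_filter.mp h).2)
      linarith
  have h0conv : (0 : E) ∈ convexHull ℝ (A' : Set E) := by
    apply Finset.mem_convexHull.mpr
    refine ⟨W, fun q hq => (hWpos q hq).le, hWsum, ?_⟩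
    rw [Finset.centerMass_eq_of_sum_1 _ _ hWsum]
    simpa only [id_eq] using hWvec
  have h0aff : (0 : E) ∈ affineSpan ℝ (A' : Set E) :=
    convexHull_subset_affineSpan _ h0conv
  have hspanA' : affineSpan ℝ (A' : Set E) = ⊤ := by
    rw [eq_top_iff]
    intro x _
    have hdir : Submodule.span ℝ (Bf : Set E) ≤ (affineSpan ℝ (A' : Set E)).direction := by
      apply Submodule.span_le.mpr
      intro p hp
      have hpA : p ∈ affineSpan ℝ (A' : Set E) :=
        subset_affineSpan ℝ _ (Finset.mem_coe.mpr (hBfA' (Finset.mem_coe.mp hp)))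
      have := AffineSubspace.vsub_mem_direction hpA h0aff
      simpa using this
    have hxdir : x ∈ (affineSpan ℝ (A' : Set E)).direction := by
      apply hdir
      rw [hBcoe, hBspan]
      trivial
    have := AffineSubspace.vadd_mem_of_mem_direction hxdir h0aff
    simpa using this
  refine ⟨A', ?_, ?_, aux_mem_interior_of_pos_combo A' W hWpos hWsum hWvec hspanA'⟩
  · rw [hA', Finset.coe_union]
    apply Set.union_subset
    · rw [hBcoe]
      exact hBX.trans hXA
    · intro p hp
      have hpG : p ∈ G := Finset.filter_subset _ _ (Finset.mem_coe.mp hp)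
      have hpF : p ∈ F := Finset.mem_coe.mp (hGF (Finset.mem_coe.mpr hpG))
      exact hXA (Finset.mem_coe.mpr (Finset.filter_subset _ _ hpF))
  · calc A'.card ≤ Bf.card + Gp.card := Finset.card_union_le _ _
    _ ≤ n + n := add_le_add hBcard ((Finset.card_filter_le _ _).trans hGcard)
    _ = 2 * n := by ring

/-- For a continuous injection `f` on an open convex `C ⊆ ℝᵏ` with convex image and a
`k`-dimensional `S ⊆ C`:
`f⁻¹[int (conv f[S])] ⊆ ⋃ { cl_C (f⁻¹[int (conv f[T])]) : T ⊆ S, |T| ≤ 2k }`,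
where `cl_C` is the closure in the relative topology of `C`
(i.e. ambient closure intersected with `C`). -/
theorem stmt11 {k : ℕ} (hk : 1 ≤ k)
    (C : Set (Fin k → ℝ)) (hCne : C.Nonempty) (hCopen : IsOpen C) (hCconv : Convex ℝ C)
    (f : (Fin k → ℝ) → (Fin k → ℝ)) (hfc : ContinuousOn f C) (hfi : Set.InjOn f C)
    (hfim : Convex ℝ (f '' C))
    (S : Set (Fin k → ℝ)) (hS : S ⊆ C)
    (hdim : (interior (convexHull ℝ S)).Nonempty) :
    C ∩ f ⁻¹' (interior (convexHull ℝ (f '' S))) ⊆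
      ⋃ T ∈ {T : Set (Fin k → ℝ) | T ⊆ S ∧ T.encard ≤ (2 * k : ℕ)},
        closure (C ∩ f ⁻¹' (interior (convexHull ℝ (f '' T)))) ∩ C := by
  classical
  intro x hx
  obtain ⟨hxC, hxf⟩ := hx
  rw [Set.mem_preimage] at hxf
  set y : Fin k → ℝ := f x with hy
  have hE : 0 < Module.finrank ℝ (Fin k → ℝ) := by
    rw [Module.finrank_fin_fun]
    exact hk
  have h0A : (0 : Fin k → ℝ) ∈ interior (convexHull ℝ ((-y) +ᵥ (f '' S))) := by
    rw [convexHull_vadd, interior_vadd, Set.mem_vadd_set]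
    exact ⟨y, hxf, by simp⟩
  obtain ⟨Y, hYA, hYcard, hY0⟩ := steinitz_zero hE _ h0A
  rw [Module.finrank_fin_fun] at hYcard
  set Z : Set (Fin k → ℝ) := y +ᵥ (Y : Set (Fin k → ℝ)) with hZ
  have hZsub : Z ⊆ f '' S := by
    rintro _ ⟨p, hp, rfl⟩
    obtain ⟨q, hq, rfl⟩ := hYA hp
    simpa using hq
  have hyZ : y ∈ interior (convexHull ℝ Z) := by
    rw [hZ, convexHull_vadd, interior_vadd, Set.mem_vadd_set]
    exact ⟨0, hY0, by simp⟩
  have hchoice : ∀ p ∈ Z, ∃ q, q ∈ S ∧ f q = p := by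
    intro p hp
    obtain ⟨q, hq, hfq⟩ := hZsub hp
    exact ⟨q, hq, hfq⟩
  choose! g hg1 hg2 using hchoice
  set T : Set (Fin k → ℝ) := g '' Z with hT
  have hTS : T ⊆ S := by
    rintro _ ⟨p, hp, rfl⟩
    exact hg1 p hp
  have hfT : f '' T = Z := by
    rw [hT, ← Set.image_comp]
    have : (f ∘ g) '' Z = id '' Z := Set.image_congr (fun p hp => hg2 p hp)
    rw [this, Set.image_id]
  have hTcard : T.encard ≤ ((2 * k : ℕ) : ℕ∞) := by
    calc T.encard ≤ Z.encard := Set.encard_image_le _ _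
    _ ≤ (Y : Set (Fin k → ℝ)).encard := by
        rw [hZ, ← Set.image_vadd]
        exact Set.encard_image_le _ _
    _ = (Y.card : ℕ∞) := Set.encard_coe_eq_coe_finsetCard Y
    _ ≤ ((2 * k : ℕ) : ℕ∞) := by exact_mod_cast hYcard
  rw [Set.mem_iUnion₂]
  refine ⟨T, ⟨hTS, hTcard⟩, ?_, hxC⟩
  apply subset_closure
  refine ⟨hxC, ?_⟩
  rw [Set.mem_preimage, hfT]
  exact hyZ
end

section
/- Let I ⊆ ℝ be an open interval, f₁,…,f_k : I → ℝ continuous injections, f : I^k → ℝ^k defined by f(x) = (f₁(x₁),…,f_k(x_k)), and S ⊆ I a set with nonempty interior. Then f[int(conv(S^k))] ⊆ int(f[conv(S^k)]) = int(conv(f[S^k])); in particular condition f[int(conv(S^k))] ⊆ int(conv(f[S^k])) of the main theorem is satisfied by S^k. -/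
open Set

lemma exists_le_of_mem_convexHull_real {S : Set ℝ} {x : ℝ} (hx : x ∈ convexHull ℝ S) :
    ∃ a ∈ S, a ≤ x := by
  by_contra h
  push_neg at h
  have : convexHull ℝ S ⊆ Ioi x := convexHull_min (fun a ha => (h a ha)) (convex_Ioi x)
  exact lt_irrefl x (this hx)

lemma exists_ge_of_mem_convexHull_real {S : Set ℝ} {x : ℝ} (hx : x ∈ convexHull ℝ S) :
    ∃ b ∈ S, x ≤ b := by
  by_contra h
  push_neg at h
  have : convexHull ℝ S ⊆ Iio x := convexHull_min (fun a ha => (h a ha)) (convex_Iio x)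
  exact lt_irrefl x (this hx)

lemma coord_image_hull {I S : Set ℝ} (hIints : Convex ℝ I) {h : ℝ → ℝ}
    (hc : ContinuousOn h I) (hi : Set.InjOn h I) (hS : S ⊆ I) :
    h '' (convexHull ℝ S) = convexHull ℝ (h '' S) := by
  have hCI : convexHull ℝ S ⊆ I := convexHull_min hS hIints
  apply Subset.antisymm
  · rintro _ ⟨x, hx, rfl⟩
    obtain ⟨a, haS, hax⟩ := exists_le_of_mem_convexHull_real hx
    obtain ⟨b, hbS, hxb⟩ := exists_ge_of_mem_convexHull_real hx
    have hab : a ≤ b := hax.trans hxb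
    have habI : Icc a b ⊆ I := hIints.ordConnected.out (hS haS) (hS hbS)
    have hmem : x ∈ Icc a b := ⟨hax, hxb⟩
    have haI : a ∈ Icc a b := left_mem_Icc.2 hab
    have hbI : b ∈ Icc a b := right_mem_Icc.2 hab
    have hms := (hc.mono habI).strictMonoOn_of_injOn_Icc' hab ((hi.mono habI))
    have hseg : h x ∈ segment ℝ (h a) (h b) := by
      rcases hms with hm | ha
      · rw [segment_eq_Icc (hm.monotoneOn haI hbI hab)]
        exact ⟨hm.monotoneOn haI hmem hax, hm.monotoneOn hmem hbI hxb⟩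
      · have hIcc : segment ℝ (h a) (h b) = Icc (h b) (h a) := by
          rw [segment_symm]; exact segment_eq_Icc (ha.antitoneOn haI hbI hab)
        rw [hIcc]
        exact ⟨ha.antitoneOn hmem hbI hxb, ha.antitoneOn haI hmem hax⟩
    exact segment_subset_convexHull (mem_image_of_mem h haS) (mem_image_of_mem h hbS) hseg
  · apply convexHull_min (image_mono (f := h) (subset_convexHull ℝ S))
    exact ((convex_convexHull ℝ S).isPreconnected.image h (hc.mono hCI)).convex

lemma coord_interior {I S : Set ℝ} (hIints : Convex ℝ I) {h : ℝ → ℝ}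
    (hc : ContinuousOn h I) (hi : Set.InjOn h I) (hS : S ⊆ I) :
    h '' interior (convexHull ℝ S) ⊆ interior (h '' convexHull ℝ S) := by
  have hCI : convexHull ℝ S ⊆ I := convexHull_min hS hIints
  rintro _ ⟨x, hx, rfl⟩
  obtain ⟨ε, hε, hball⟩ := Metric.isOpen_iff.1 isOpen_interior x hx
  have hab : Icc (x - ε/2) (x + ε/2) ⊆ interior (convexHull ℝ S) := by
    intro y hy
    apply hball
    rw [Real.ball_eq_Ioo]
    constructor <;> [linarith [hy.1]; linarith [hy.2]]
  set a := x - ε/2 with ha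
  set b := x + ε/2 with hb
  have hax : a < x := by simp [ha]; linarith
  have hxb : x < b := by simp [hb]; linarith
  have hab' : a ≤ b := (hax.trans hxb).le
  have habC : Icc a b ⊆ convexHull ℝ S := hab.trans interior_subset
  have habI : Icc a b ⊆ I := habC.trans hCI
  have hcc : ContinuousOn h (Icc a b) := hc.mono habI
  have hms := hcc.strictMonoOn_of_injOn_Icc' hab' (hi.mono habI)
  have haI : a ∈ Icc a b := left_mem_Icc.2 hab'
  have hbI : b ∈ Icc a b := right_mem_Icc.2 hab'
  have hmem : x ∈ Icc a b := ⟨hax.le, hxb.le⟩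
  rcases hms with hm | hanti
  · have h1 : h a < h x := hm haI hmem hax
    have h2 : h x < h b := hm hmem hbI hxb
    have hsub : Ioo (h a) (h b) ⊆ h '' convexHull ℝ S :=
      (Ioo_subset_Icc_self.trans ((intermediate_value_Icc hab' hcc).trans
        (image_mono (f := h) habC)))
    exact mem_interior.2 ⟨Ioo (h a) (h b), hsub, isOpen_Ioo, ⟨h1, h2⟩⟩
  · have h1 : h b < h x := hanti hmem hbI hxb
    have h2 : h x < h a := hanti haI hmem hax
    have hsub : Ioo (h b) (h a) ⊆ h '' convexHull ℝ S :=
      (Ioo_subset_Icc_self.trans ((intermediate_value_Icc' hab' hcc).trans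
        (image_mono (f := h) habC)))
    exact mem_interior.2 ⟨Ioo (h b) (h a), hsub, isOpen_Ioo, ⟨h1, h2⟩⟩

lemma image_pi_eq' {k : ℕ} (g : Fin k → ℝ → ℝ) (t : Fin k → Set ℝ) :
    (fun x : Fin k → ℝ => fun i => g i (x i)) '' Set.pi univ t
      = Set.pi univ (fun i => g i '' t i) := by
  ext y
  constructor
  · rintro ⟨x, hx, rfl⟩ i _
    exact ⟨x i, hx i (mem_univ i), rfl⟩
  · intro hy
    choose x hx hgx using fun i => hy i (mem_univ i)
    exact ⟨x, fun i _ => hx i, funext hgx⟩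

/-- Step in the proof of the corollary: for `I ⊆ ℝ` an open interval (open convex
subset of `ℝ`), `f₁,…,f_k : I → ℝ` continuous injections, `f(x) = (f₁(x₁),…,f_k(x_k))`,
and `S ⊆ I` with nonempty interior:
`f[int (conv (S^k))] ⊆ int (f[conv (S^k)]) = int (conv (f[S^k]))`. -/
theorem stmt16 {k : ℕ} (hk : 1 ≤ k)
    (I : Set ℝ) (hIopen : IsOpen I) (hIints : Convex ℝ I)
    (g : Fin k → ℝ → ℝ) (hgc : ∀ i, ContinuousOn (g i) I) (hgi : ∀ i, Set.InjOn (g i) I)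
    (S : Set ℝ) (hS : S ⊆ I) (hSint : (interior S).Nonempty) :
    (fun x : Fin k → ℝ => fun i => g i (x i)) ''
        interior (convexHull ℝ {x : Fin k → ℝ | ∀ i, x i ∈ S}) ⊆
      interior ((fun x : Fin k → ℝ => fun i => g i (x i)) ''
        convexHull ℝ {x : Fin k → ℝ | ∀ i, x i ∈ S}) ∧
    interior ((fun x : Fin k → ℝ => fun i => g i (x i)) ''
        convexHull ℝ {x : Fin k → ℝ | ∀ i, x i ∈ S}) =
      interior (convexHull ℝ ((fun x : Fin k → ℝ => fun i => g i (x i)) ''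
        {x : Fin k → ℝ | ∀ i, x i ∈ S})) := by
  have hTpi : {x : Fin k → ℝ | ∀ i, x i ∈ S} = Set.pi univ (fun _ => S) := by
    ext x; simp [Set.mem_pi]
  have hconv : convexHull ℝ {x : Fin k → ℝ | ∀ i, x i ∈ S}
      = Set.pi univ (fun _ => convexHull ℝ S) := by
    rw [hTpi, convexHull_pi]
  have hA : ∀ i, g i '' convexHull ℝ S = convexHull ℝ (g i '' S) :=
    fun i => coord_image_hull hIints (hgc i) (hgi i) hS
  constructor
  · rw [hconv, interior_pi_set finite_univ, image_pi_eq', image_pi_eq',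
      interior_pi_set finite_univ]
    exact Set.pi_mono fun i _ => coord_interior hIints (hgc i) (hgi i) hS
  · rw [hconv, hTpi, image_pi_eq', image_pi_eq', convexHull_pi]
    exact congrArg interior (Set.pi_congr rfl fun i _ => hA i)
end
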